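/- The algebra homomorphism f̃: Cl(R^3, Q) → Cl(R^4, Q̃) induced by e_1↦e_1, e_2↦e_2, e_0↦(1/√2)(e_3+e_4) is injective. -/
import Mathlib

/-- The quadratic form `Q̃(x) = x₁² + x₂² + x₃² - x₄²` on `ℝ⁴`. -/
noncomputable def Qtilde : QuadraticForm ℝ (Fin 4 → ℝ) :=
  QuadraticMap.weightedSumSquares ℝ ![(1 : ℝ), 1, 1, -1]

/-- The degenerate quadratic form `Q(v₀e₀ + v₁e₁ + v₂e₂) = v₁² + v₂²` on `ℝ³`
(index `0` corresponds to the degenerate vector `e₀`). -/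
noncomputable def Qdeg : QuadraticForm ℝ (Fin 3 → ℝ) :=
  QuadraticMap.weightedSumSquares ℝ ![(0 : ℝ), 1, 1]


open Complex in
/-- `w ↦ Σ wᵢ γᵢ` for Dirac-type gamma matrices. -/
noncomputable def Mv : (Fin 4 → ℝ) →ₗ[ℝ] Matrix (Fin 4) (Fin 4) ℂ where
  toFun w := !![(w 3 : ℂ), 0, (w 2 : ℂ), (w 0 : ℂ) - (w 1 : ℂ)*I;
                0, (w 3 : ℂ), (w 0 : ℂ) + (w 1 : ℂ)*I, -(w 2 : ℂ);
                -(w 2 : ℂ), -(w 0 : ℂ) + (w 1 : ℂ)*I, -(w 3 : ℂ), 0;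
                -(w 0 : ℂ) - (w 1 : ℂ)*I, (w 2 : ℂ), 0, -(w 3 : ℂ)]
  map_add' x y := by
    ext i j
    fin_cases i <;> fin_cases j <;> simp <;> ring
  map_smul' r x := by
    ext i j
    fin_cases i <;> fin_cases j <;> simp <;> ring

theorem Mv_sq (w : Fin 4 → ℝ) :
    Mv w * Mv w = algebraMap ℝ (Matrix (Fin 4) (Fin 4) ℂ) ((-Qtilde) w) := by
  have hq : (-Qtilde) w = -(w 0 * w 0 + w 1 * w 1 + w 2 * w 2 - w 3 * w 3) := by
    simp [Qtilde, QuadraticMap.weightedSumSquares_apply, Fin.sum_univ_four]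
    ring
  ext i j
  rw [Matrix.algebraMap_matrix_apply, hq]
  fin_cases i <;> fin_cases j <;>
    simp [Mv, Matrix.mul_apply, Fin.sum_univ_four, Complex.ext_iff]
  all_goals first | (constructor <;> ring) | ring

noncomputable def G : CliffordAlgebra (-Qtilde) →ₐ[ℝ] Matrix (Fin 4) (Fin 4) ℂ :=
  CliffordAlgebra.lift (-Qtilde) ⟨Mv, Mv_sq⟩

lemma G_ι (w : Fin 4 → ℝ) : G (CliffordAlgebra.ι (-Qtilde) w) = Mv w :=
  CliffordAlgebra.lift_ι_apply _ _ _

/-- The linear map `f : ℝ³ → ℝ⁴` with `f(e₁)=e₁`, `f(e₂)=e₂`, `f(e₀)=(1/√2)(e₃+e₄)`. -/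
noncomputable def Lmap : (Fin 3 → ℝ) →ₗ[ℝ] (Fin 4 → ℝ) where
  toFun v := ![v 1, v 2, (Real.sqrt 2)⁻¹ * v 0, (Real.sqrt 2)⁻¹ * v 0]
  map_add' x y := by
    funext i
    fin_cases i <;> simp <;> ring
  map_smul' c x := by
    funext i
    fin_cases i <;> simp <;> ring
namespace Stmt4Aux

open CliffordAlgebra

noncomputable abbrev ι' := CliffordAlgebra.ι (-Qdeg)

def e₀ : Fin 3 → ℝ := ![1, 0, 0]
def e₁ : Fin 3 → ℝ := ![0, 1, 0]
def e₂ : Fin 3 → ℝ := ![0, 0, 1]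

noncomputable def a : CliffordAlgebra (-Qdeg) := ι' e₀
noncomputable def b : CliffordAlgebra (-Qdeg) := ι' e₁
noncomputable def c : CliffordAlgebra (-Qdeg) := ι' e₂

lemma Qdeg_apply (v : Fin 3 → ℝ) : Qdeg v = v 1 * v 1 + v 2 * v 2 := by
  simp [Qdeg, QuadraticMap.weightedSumSquares_apply, Fin.sum_univ_three]

lemma ra : a * a = 0 := by
  rw [a, ι_sq_scalar]
  simp [Qdeg_apply, e₀]

lemma rb : b * b = -1 := by
  rw [b, ι_sq_scalar]
  simp [Qdeg_apply, e₁]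

lemma rc : c * c = -1 := by
  rw [c, ι_sq_scalar]
  simp [Qdeg_apply, e₂]

lemma polar_eq (x y : Fin 3 → ℝ) :
    QuadraticMap.polar (⇑(-Qdeg)) x y = -(2 * (x 1 * y 1) + 2 * (x 2 * y 2)) := by
  simp [QuadraticMap.polar, Qdeg_apply]
  ring

lemma anticomm (x y : Fin 3 → ℝ) (h : x 1 * y 1 + x 2 * y 2 = 0) :
    ι' y * ι' x = -(ι' x * ι' y) := by
  have h2 := ι_mul_ι_add_swap (Q := -Qdeg) x y
  rw [polar_eq] at h2
  have h0 : -(2 * (x 1 * y 1) + 2 * (x 2 * y 2)) = 0 := by linarith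
  rw [h0, map_zero] at h2
  rw [eq_neg_iff_add_eq_zero, add_comm]
  exact h2

lemma sba : b * a = -(a * b) := anticomm e₀ e₁ (by simp [e₀, e₁])
lemma sca : c * a = -(a * c) := anticomm e₀ e₂ (by simp [e₀, e₂])
lemma scb : c * b = -(b * c) := anticomm e₁ e₂ (by simp [e₁, e₂])

lemma ra' (x : CliffordAlgebra (-Qdeg)) : a * (a * x) = 0 := by
  rw [← mul_assoc, ra, zero_mul]
lemma rb' (x : CliffordAlgebra (-Qdeg)) : b * (b * x) = -x := by
  rw [← mul_assoc, rb, neg_one_mul]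
lemma rc' (x : CliffordAlgebra (-Qdeg)) : c * (c * x) = -x := by
  rw [← mul_assoc, rc, neg_one_mul]
lemma sba' (x : CliffordAlgebra (-Qdeg)) : b * (a * x) = -(a * (b * x)) := by
  rw [← mul_assoc, sba, ← mul_assoc, neg_mul]
lemma sca' (x : CliffordAlgebra (-Qdeg)) : c * (a * x) = -(a * (c * x)) := by
  rw [← mul_assoc, sca, ← mul_assoc, neg_mul]
lemma scb' (x : CliffordAlgebra (-Qdeg)) : c * (b * x) = -(b * (c * x)) := by
  rw [← mul_assoc, scb, ← mul_assoc, neg_mul]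

/-- The eight monomials. -/
noncomputable def Mon : Fin 8 → CliffordAlgebra (-Qdeg) :=
  ![1, a, b, c, a * b, a * c, b * c, a * b * c]

noncomputable def P : Submodule ℝ (CliffordAlgebra (-Qdeg)) :=
  Submodule.span ℝ (Set.range Mon)

lemma mem_P (i : Fin 8) : Mon i ∈ P := Submodule.subset_span ⟨i, rfl⟩

lemma Mon0 : Mon 0 = 1 := rfl
lemma Mon1 : Mon 1 = a := rfl
lemma Mon2 : Mon 2 = b := rfl
lemma Mon3 : Mon 3 = c := rfl
lemma Mon4 : Mon 4 = a * b := rfl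
lemma Mon5 : Mon 5 = a * c := rfl
lemma Mon6 : Mon 6 = b * c := rfl
lemma Mon7 : Mon 7 = a * (b * c) := by rw [← mul_assoc]; rfl

lemma p1 : (1 : CliffordAlgebra (-Qdeg)) ∈ P := mem_P 0
lemma pa : a ∈ P := mem_P 1
lemma pb : b ∈ P := mem_P 2
lemma pc : c ∈ P := mem_P 3
lemma pab : a * b ∈ P := mem_P 4
lemma pac : a * c ∈ P := mem_P 5
lemma pbc : b * c ∈ P := mem_P 6
lemma pabc : a * (b * c) ∈ P := by rw [← mul_assoc]; exact mem_P 7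

lemma mul_mem_P : ∀ x ∈ P, ∀ y ∈ P, x * y ∈ P := by
  intro x hx y hy
  have key : ∀ (i j : Fin 8), Mon i * Mon j ∈ P := by
    intro i j
    fin_cases i <;> fin_cases j <;>
      simp [Mon0, Mon1, Mon2, Mon3, Mon4, Mon5, Mon6, Mon7, mul_assoc, ra', rb', rc', sba', sca', scb', ra, rb, rc, sba, sca, scb,
        mul_neg, neg_mul, neg_neg, mul_zero, zero_mul, neg_zero] <;>
      first
        | exact P.zero_mem
        | exact p1 | exact pa | exact pb | exact pc
        | exact pab | exact pac | exact pbc | exact pabc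
        | exact P.neg_mem p1 | exact P.neg_mem pa | exact P.neg_mem pb | exact P.neg_mem pc
        | exact P.neg_mem pab | exact P.neg_mem pac | exact P.neg_mem pbc
        | exact P.neg_mem pabc
  -- bilinear extension
  induction hx using Submodule.span_induction with
  | mem x hx =>
    obtain ⟨i, rfl⟩ := hx
    induction hy using Submodule.span_induction with
    | mem y hy => obtain ⟨j, rfl⟩ := hy; exact key i j
    | zero => simpa using P.zero_mem
    | add y z _ _ h1 h2 => rw [mul_add]; exact P.add_mem h1 h2
    | smul r y _ h1 => rw [mul_smul_comm]; exact P.smul_mem r h1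
  | zero => simpa using P.zero_mem
  | add x z _ _ h1 h2 => rw [add_mul]; exact P.add_mem h1 h2
  | smul r x _ h1 => rw [smul_mul_assoc]; exact P.smul_mem r h1

lemma top_le_P : ∀ x : CliffordAlgebra (-Qdeg), x ∈ P := by
  intro x
  induction x using CliffordAlgebra.induction with
  | algebraMap r => rw [Algebra.algebraMap_eq_smul_one]; exact P.smul_mem r p1
  | ι v =>
    have hv : v = v 0 • e₀ + v 1 • e₁ + v 2 • e₂ := by
      funext i; fin_cases i <;> simp [e₀, e₁, e₂]
    rw [hv, map_add, map_add, map_smul, map_smul, map_smul]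
    exact P.add_mem (P.add_mem (P.smul_mem _ pa) (P.smul_mem _ pb)) (P.smul_mem _ pc)
  | mul x y hx hy => exact mul_mem_P x hx y hy
  | add x y hx hy => exact P.add_mem hx hy

end Stmt4Aux

namespace Stmt4Aux

noncomputable def s : ℝ := (Real.sqrt 2)⁻¹

lemma hs : s ≠ 0 := by
  have h : (0:ℝ) < Real.sqrt 2 := Real.sqrt_pos.mpr (by norm_num)
  rw [s]
  exact inv_ne_zero (ne_of_gt h)

noncomputable def w₀ : Fin 4 → ℝ := ![0, 0, s, s]
noncomputable def w₁ : Fin 4 → ℝ := ![1, 0, 0, 0]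
noncomputable def w₂ : Fin 4 → ℝ := ![0, 1, 0, 0]

lemma Lmap_e₀ : Lmap e₀ = w₀ := by
  funext i; fin_cases i <;> simp [Lmap, e₀, w₀, s]
lemma Lmap_e₁ : Lmap e₁ = w₁ := by
  funext i; fin_cases i <;> simp [Lmap, e₁, w₁]
lemma Lmap_e₂ : Lmap e₂ = w₂ := by
  funext i; fin_cases i <;> simp [Lmap, e₂, w₂]


open Complex in
noncomputable def NU : Matrix (Fin 4) (Fin 4) ℂ :=
  !![(s:ℂ), 0, (s:ℂ), 0; 0, (s:ℂ), 0, -(s:ℂ); -(s:ℂ), 0, -(s:ℂ), 0; 0, (s:ℂ), 0, -(s:ℂ)]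
open Complex in
noncomputable def NA : Matrix (Fin 4) (Fin 4) ℂ :=
  !![0, 0, 0, 1; 0, 0, 1, 0; 0, -1, 0, 0; -1, 0, 0, 0]
open Complex in
noncomputable def NB : Matrix (Fin 4) (Fin 4) ℂ :=
  !![0, 0, 0, -I; 0, 0, I, 0; 0, I, 0, 0; -I, 0, 0, 0]
open Complex in
noncomputable def NUA : Matrix (Fin 4) (Fin 4) ℂ :=
  !![0, -(s:ℂ), 0, (s:ℂ); (s:ℂ), 0, (s:ℂ), 0; 0, (s:ℂ), 0, -(s:ℂ); (s:ℂ), 0, (s:ℂ), 0]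
open Complex in
noncomputable def NUB : Matrix (Fin 4) (Fin 4) ℂ :=
  !![0, (s:ℂ)*I, 0, -((s:ℂ)*I); (s:ℂ)*I, 0, (s:ℂ)*I, 0;
     0, -((s:ℂ)*I), 0, (s:ℂ)*I; (s:ℂ)*I, 0, (s:ℂ)*I, 0]
open Complex in
noncomputable def NAB : Matrix (Fin 4) (Fin 4) ℂ :=
  !![-I, 0, 0, 0; 0, I, 0, 0; 0, 0, -I, 0; 0, 0, 0, I]
open Complex in
noncomputable def NUAB : Matrix (Fin 4) (Fin 4) ℂ :=
  !![-((s:ℂ)*I), 0, -((s:ℂ)*I), 0; 0, (s:ℂ)*I, 0, -((s:ℂ)*I);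
     (s:ℂ)*I, 0, (s:ℂ)*I, 0; 0, (s:ℂ)*I, 0, -((s:ℂ)*I)]

lemma Mv_w₀ : Mv w₀ = NU := by
  ext i j; fin_cases i <;> fin_cases j <;> simp [Mv, w₀, NU]
lemma Mv_w₁ : Mv w₁ = NA := by
  ext i j; fin_cases i <;> fin_cases j <;> simp [Mv, w₁, NA]
lemma Mv_w₂ : Mv w₂ = NB := by
  ext i j; fin_cases i <;> fin_cases j <;> simp [Mv, w₂, NB]

lemma mulNUA : NU * NA = NUA := by
  ext i j
  fin_cases i <;> fin_cases j <;>
    simp [NU, NA, NUA, Matrix.mul_apply, Fin.sum_univ_four, Matrix.vecHead, Matrix.vecTail] <;> ring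
lemma mulNUB : NU * NB = NUB := by
  ext i j
  fin_cases i <;> fin_cases j <;>
    simp [NU, NB, NUB, Matrix.mul_apply, Fin.sum_univ_four, Matrix.vecHead, Matrix.vecTail] <;> ring
lemma mulNAB : NA * NB = NAB := by
  ext i j
  fin_cases i <;> fin_cases j <;>
    simp [NA, NB, NAB, Matrix.mul_apply, Fin.sum_univ_four, Matrix.vecHead, Matrix.vecTail] <;> ring
lemma mulNUAB : NU * NAB = NUAB := by
  ext i j
  fin_cases i <;> fin_cases j <;>
    simp [NU, NAB, NUAB, Matrix.mul_apply, Fin.sum_univ_four, Matrix.vecHead, Matrix.vecTail] <;> ring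

end Stmt4Aux

open Stmt4Aux in
/-- The induced algebra homomorphism `f̃ : Cl(ℝ³, Q) → Cl(ℝ⁴, Q̃)` is injective. -/
theorem stmt4 (F : CliffordAlgebra (-Qdeg) →ₐ[ℝ] CliffordAlgebra (-Qtilde))
    (hF : ∀ v : Fin 3 → ℝ,
      F (CliffordAlgebra.ι (-Qdeg) v) = CliffordAlgebra.ι (-Qtilde) (Lmap v)) :
    Function.Injective F := by
  rw [injective_iff_map_eq_zero]
  intro x hx
  obtain ⟨cf, hcf⟩ := (Submodule.mem_span_range_iff_exists_fun ℝ).mp (top_le_P x)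
  have hGa : G (F a) = Mv w₀ := by rw [a, hF e₀, Lmap_e₀, G_ι]
  have hGb : G (F b) = Mv w₁ := by rw [b, hF e₁, Lmap_e₁, G_ι]
  have hGc : G (F c) = Mv w₂ := by rw [c, hF e₂, Lmap_e₂, G_ι]
  have E : ∑ i, cf i • G (F (Mon i)) = 0 := by
    have : G (F x) = 0 := by rw [hx, map_zero]
    rw [← hcf] at this
    simpa only [map_sum, map_smul] using this
  rw [Fin.sum_univ_eight] at E
  simp only [Mon0, Mon1, Mon2, Mon3, Mon4, Mon5, Mon6, Mon7,
    map_mul, map_one, hGa, hGb, hGc, Mv_w₀, Mv_w₁, Mv_w₂,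
    mulNAB, mulNUA, mulNUB, mulNUAB] at E
  -- extract entries
  have E00 := congrFun (congrFun E 0) 0
  have E01 := congrFun (congrFun E 0) 1
  have E02 := congrFun (congrFun E 0) 2
  have E03 := congrFun (congrFun E 0) 3
  simp [Matrix.add_apply, Matrix.smul_apply, Matrix.one_apply,
    NU, NA, NB, NUA, NUB, NAB, NUAB,
    Complex.real_smul, Complex.ext_iff] at E00 E01 E02 E03
  have h4 := E01.1.resolve_right hs
  have h5 := E01.2.resolve_right hs
  have h1 := E02.1.resolve_right hs
  have h7 := E02.2.resolve_right hs
  simp only [h4, h5, h1, h7, zero_mul, add_zero, neg_add_rev, neg_zero, neg_eq_zero,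
    zero_add] at E00 E03
  rw [← hcf, Fin.sum_univ_eight]
  simp [h4, h5, h1, h7, E00.1, E00.2, E03.1, E03.2]
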